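/- arXiv:0904.1971 — 4 statements merged into one kernel-verified Lean document; each statement's English description precedes it below -/
import Mathlib

section
/- Let B(z) = I + ((z₀ - ζ₀)/(z - z₀)) · (p q†)/(q†p) with q†p ≠ 0, and suppose at some point z* (z* ≠ z₀) we have B(z*) w = v for vectors v, w with q†w ≠ 0 and q†v ≠ 0. Then B(z) = I + (1/(z - z₀)) [ (z₀ - z*) (w q†)/(q†w) + (z* - ζ₀) (v q†)/(q†v) ] for all z ≠ z₀; i.e., the vector p/(q†p) equals ((z₀ - z*)/(z₀ - ζ₀)) w/(q†w) + ((z* - ζ₀)/(z₀ - ζ₀)) v/(q†v), assuming z₀ ≠ ζ₀. -/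
open Matrix

/-
Write `u = p / (q†p)` and `a = (z₀ - ζ₀)/(z⋆ - z₀)`, so `B(z⋆) = I + a u q†` with `q†u = 1`.
Then `v = B(z⋆) w = w + a (q†w) u`, which solves for `u` as a combination of `w` and `v`,
and pairing with `q†` gives `q†v = (1 + a) q†w`, which turns the coefficient of `v` into
`(1 + a⁻¹)/(q†v)`. The formula for `B(z)` follows by substituting this expression for `u`
into the rank-one term `u q†`.
-/

theorem one_add_smul_vecMulVec_mulVec {n R : Type*} [Fintype n] [DecidableEq n] [CommRing R]
    (a : R) (u q w : n → R) :
    (1 + a • vecMulVec u q) *ᵥ w = w + (a * (q ⬝ᵥ w)) • u := by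
  rw [add_mulVec, one_mulVec, smul_mulVec, vecMulVec_mulVec, op_smul_eq_smul, smul_smul]

theorem eq_smul_add_smul_of_one_add_smul_vecMulVec_mulVec {n K : Type*} [Fintype n]
    [DecidableEq n] [Field K] {a : K} {u q w v : n → K} (hu : q ⬝ᵥ u = 1) (ha : a ≠ 0)
    (hqw : q ⬝ᵥ w ≠ 0) (hqv : q ⬝ᵥ v ≠ 0) (h : (1 + a • vecMulVec u q) *ᵥ w = v) :
    u = (-a⁻¹) • (q ⬝ᵥ w)⁻¹ • w + (1 + a⁻¹) • (q ⬝ᵥ v)⁻¹ • v := by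
  rw [one_add_smul_vecMulVec_mulVec] at h
  have hqv_eq : q ⬝ᵥ v = (1 + a) * (q ⬝ᵥ w) := by
    rw [← h, dotProduct_add, dotProduct_smul, hu, smul_eq_mul, mul_one, add_mul, one_mul]
  have hcoeff : (1 + a⁻¹) * (q ⬝ᵥ v)⁻¹ = (a * (q ⬝ᵥ w))⁻¹ := by
    have h1a : 1 + a ≠ 0 := left_ne_zero_of_mul (hqv_eq ▸ hqv)
    rw [hqv_eq]
    field_simp
    ring
  have hu_eq : u = (a * (q ⬝ᵥ w))⁻¹ • (v - w) := by
    rw [← h, add_sub_cancel_left, smul_smul, inv_mul_cancel₀ (mul_ne_zero ha hqw), one_smul]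
  rw [smul_smul, smul_smul, hcoeff, mul_inv, neg_mul, neg_smul]
  conv_lhs => rw [hu_eq]
  rw [smul_sub, mul_inv]
  abel

/-- If `B(z⋆) w = v` for an elementary divisor `B`, then `B` can be rewritten in terms of
`w`, `v`, `q†`: `B(z) = I + (1/(z-z₀))[(z₀-z⋆)(w q†)/(q†w) + (z⋆-ζ₀)(v q†)/(q†v)]`,
equivalently `p/(q†p) = ((z₀-z⋆)/(z₀-ζ₀)) w/(q†w) + ((z⋆-ζ₀)/(z₀-ζ₀)) v/(q†v)`. -/
theorem elementary_divisor_from_action {m : ℕ} (p q w v : Fin m → ℂ) (z₀ ζ₀ zs : ℂ)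
    (hpq : q ⬝ᵥ p ≠ 0) (hqw : q ⬝ᵥ w ≠ 0) (hqv : q ⬝ᵥ v ≠ 0)
    (hz0 : z₀ ≠ ζ₀) (hzs : zs ≠ z₀)
    (hBw : ((1 : Matrix (Fin m) (Fin m) ℂ) +
        ((z₀ - ζ₀) / (zs - z₀)) • (q ⬝ᵥ p)⁻¹ • Matrix.vecMulVec p q).mulVec w = v) :
    ((q ⬝ᵥ p)⁻¹ • p
        = ((z₀ - zs) / (z₀ - ζ₀)) • (q ⬝ᵥ w)⁻¹ • w
          + ((zs - ζ₀) / (z₀ - ζ₀)) • (q ⬝ᵥ v)⁻¹ • v) ∧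
    (∀ z : ℂ, z ≠ z₀ →
      (1 : Matrix (Fin m) (Fin m) ℂ) +
          ((z₀ - ζ₀) / (z - z₀)) • (q ⬝ᵥ p)⁻¹ • Matrix.vecMulVec p q
        = (1 : Matrix (Fin m) (Fin m) ℂ) + (z - z₀)⁻¹ •
            ((z₀ - zs) • (q ⬝ᵥ w)⁻¹ • Matrix.vecMulVec w q
              + (zs - ζ₀) • (q ⬝ᵥ v)⁻¹ • Matrix.vecMulVec v q)) := by
  have hz0' : z₀ - ζ₀ ≠ 0 := sub_ne_zero.mpr hz0
  have hzs' : zs - z₀ ≠ 0 := sub_ne_zero.mpr hzs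
  have hu : q ⬝ᵥ (q ⬝ᵥ p)⁻¹ • p = 1 := by rw [dotProduct_smul, smul_eq_mul, inv_mul_cancel₀ hpq]
  rw [← smul_vecMulVec] at hBw
  have hp := eq_smul_add_smul_of_one_add_smul_vecMulVec_mulVec hu
    (div_ne_zero hz0' hzs') hqw hqv hBw
  have hcoeff_w : -((z₀ - ζ₀) / (zs - z₀))⁻¹ = (z₀ - zs) / (z₀ - ζ₀) := by
    field_simp
    ring
  have hcoeff_v : 1 + ((z₀ - ζ₀) / (zs - z₀))⁻¹ = (zs - ζ₀) / (z₀ - ζ₀) := by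
    field_simp
    ring
  rw [hcoeff_w, hcoeff_v] at hp
  refine ⟨hp, fun z _ => ?_⟩
  rw [← smul_vecMulVec, hp]
  simp only [add_vecMulVec, smul_vecMulVec, smul_add, smul_smul]
  congr 3 <;> field_simp
end

section
/- Let B(z) = I + ((z₀ - ζ₀)/(z - z₀)) · (p q†)/(q†p) with q†p ≠ 0, and suppose at some point z* ≠ z₀ we have w† B(z*) = v† for row vectors w†, v† with w†p ≠ 0 and v†p ≠ 0. Then B(z) = I + (1/(z - z₀)) [ (z₀ - z*) (p w†)/(w†p) + (z* - ζ₀) (p v†)/(v†p) ] for all z ≠ z₀, assuming z₀ ≠ ζ₀. -/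
open Matrix

/-! With `P = p q† / (q†p)`, a row vector sees `I + c P` as `w† ↦ w† + c (w†p / q†p) q†`.
Hence `v†p = (1 + c) w†p` with `1 + c = (z⋆ - ζ₀)/(z⋆ - z₀)`, and `p v†` is `p w†` plus a
multiple of `P`; the two terms of the claimed residue then combine to `(z₀ - ζ₀) P`. -/

section RankOnePerturbation

variable {K n : Type*} [Field K] [Fintype n] [DecidableEq n] (p q w : n → K) (c : K)

theorem vecMul_one_add_smul_vecMulVec :
    w ᵥ* (1 + c • (q ⬝ᵥ p)⁻¹ • vecMulVec p q) = w + (c * (q ⬝ᵥ p)⁻¹ * (w ⬝ᵥ p)) • q := by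
  rw [vecMul_add, vecMul_one, vecMul_smul, vecMul_smul, vecMul_vecMulVec, smul_smul, smul_smul]

theorem vecMul_one_add_smul_vecMulVec_dotProduct (hpq : q ⬝ᵥ p ≠ 0) :
    (w ᵥ* (1 + c • (q ⬝ᵥ p)⁻¹ • vecMulVec p q)) ⬝ᵥ p = (1 + c) * (w ⬝ᵥ p) := by
  rw [vecMul_one_add_smul_vecMulVec, add_dotProduct, smul_dotProduct, smul_eq_mul]
  field_simp

theorem vecMulVec_vecMul_one_add_smul_vecMulVec :
    vecMulVec p (w ᵥ* (1 + c • (q ⬝ᵥ p)⁻¹ • vecMulVec p q)) =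
      vecMulVec p w + (c * (w ⬝ᵥ p)) • (q ⬝ᵥ p)⁻¹ • vecMulVec p q := by
  rw [vecMul_one_add_smul_vecMulVec, vecMulVec_add, vecMulVec_smul, smul_smul, mul_right_comm]

end RankOnePerturbation

theorem elementary_divisor_from_coaction_general {m : ℕ} (p q w v : Fin m → ℂ) (z₀ ζ₀ zs : ℂ)
    (hpq : q ⬝ᵥ p ≠ 0) (hvp : v ⬝ᵥ p ≠ 0)
    (hzs : zs ≠ z₀)
    (hwB : Matrix.vecMul w ((1 : Matrix (Fin m) (Fin m) ℂ) +
        ((z₀ - ζ₀) / (zs - z₀)) • (q ⬝ᵥ p)⁻¹ • Matrix.vecMulVec p q) = v) :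
    ∀ z : ℂ, z ≠ z₀ →
      (1 : Matrix (Fin m) (Fin m) ℂ) +
          ((z₀ - ζ₀) / (z - z₀)) • (q ⬝ᵥ p)⁻¹ • Matrix.vecMulVec p q
        = (1 : Matrix (Fin m) (Fin m) ℂ) + (z - z₀)⁻¹ •
            ((z₀ - zs) • (w ⬝ᵥ p)⁻¹ • Matrix.vecMulVec p w
              + (zs - ζ₀) • (v ⬝ᵥ p)⁻¹ • Matrix.vecMulVec p v) := by
  intro z _
  subst hwB
  have hzs_sub : zs - z₀ ≠ 0 := sub_ne_zero.mpr hzs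
  rw [vecMul_one_add_smul_vecMulVec_dotProduct _ _ _ _ hpq] at hvp ⊢
  have hc : 1 + (z₀ - ζ₀) / (zs - z₀) = (zs - ζ₀) / (zs - z₀) := by field_simp; ring
  rw [hc] at hvp ⊢
  obtain ⟨hratio, hwp⟩ := mul_ne_zero_iff.mp hvp
  have hzsζ : zs - ζ₀ ≠ 0 := (div_ne_zero_iff.mp hratio).1
  rw [vecMulVec_vecMul_one_add_smul_vecMulVec]
  congr 1
  match_scalars
  · field_simp
  · field_simp
    ring

/-- Row-vector version: if `w† B(z⋆) = v†` for an elementary divisor `B`, then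
`B(z) = I + (1/(z-z₀))[(z₀-z⋆)(p w†)/(w†p) + (z⋆-ζ₀)(p v†)/(v†p)]` for all `z ≠ z₀`. -/
theorem elementary_divisor_from_coaction {m : ℕ} (p q w v : Fin m → ℂ) (z₀ ζ₀ zs : ℂ)
    (hpq : q ⬝ᵥ p ≠ 0) (hwp : w ⬝ᵥ p ≠ 0) (hvp : v ⬝ᵥ p ≠ 0)
    (hz0 : z₀ ≠ ζ₀) (hzs : zs ≠ z₀)
    (hwB : Matrix.vecMul w ((1 : Matrix (Fin m) (Fin m) ℂ) +
        ((z₀ - ζ₀) / (zs - z₀)) • (q ⬝ᵥ p)⁻¹ • Matrix.vecMulVec p q) = v) :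
    ∀ z : ℂ, z ≠ z₀ →
      (1 : Matrix (Fin m) (Fin m) ℂ) +
          ((z₀ - ζ₀) / (z - z₀)) • (q ⬝ᵥ p)⁻¹ • Matrix.vecMulVec p q
        = (1 : Matrix (Fin m) (Fin m) ℂ) + (z - z₀)⁻¹ •
            ((z₀ - zs) • (w ⬝ᵥ p)⁻¹ • Matrix.vecMulVec p w
              + (zs - ζ₀) • (v ⬝ᵥ p)⁻¹ • Matrix.vecMulVec p v) :=
  elementary_divisor_from_coaction_general p q w v z₀ ζ₀ zs hpq hvp hzs hwB
end

section
/- Let L(z) = B(z)·L_l(z) where B(z) = I + ((z_s - ζ_s)/(z - z_s))·(p q†)/(q†p) is an elementary divisor (q†p ≠ 0) and L_l(z) is regular and invertible at both z_s and ζ_s. If L(z) has a simple pole at z_s with rank-one residue a b† (a, b† nonzero), and M(z) = L(z)⁻¹ has a simple pole at ζ_s with residue -c d† (c, d† nonzero), then a is proportional to p and d† is proportional to q†; consequently B(z) = I + ((z_s - ζ_s)/(z - z_s))·(a d†)/(d†a), assuming d†a ≠ 0. -/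
open Matrix Filter Topology

section LeftDivisorAux
variable {m : ℕ}

lemma vmv_mul (p q : Fin m → ℂ) (A : Matrix (Fin m) (Fin m) ℂ) :
    Matrix.vecMulVec p q * A = Matrix.vecMulVec p (Matrix.vecMul q A) := by
  ext i j
  simp only [Matrix.mul_apply, Matrix.vecMulVec_apply, Matrix.vecMul, dotProduct,
    Finset.mul_sum]
  exact Finset.sum_congr rfl fun k _ => by ring

lemma mul_vmv (A : Matrix (Fin m) (Fin m) ℂ) (p q : Fin m → ℂ) :
    A * Matrix.vecMulVec p q = Matrix.vecMulVec (A.mulVec p) q := by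
  ext i j
  simp only [Matrix.mul_apply, Matrix.vecMulVec_apply, Matrix.mulVec, dotProduct,
    Finset.sum_mul]
  exact Finset.sum_congr rfl fun k _ => by ring

lemma vmv_mul_vmv (p q u w : Fin m → ℂ) :
    Matrix.vecMulVec p q * Matrix.vecMulVec u w = (q ⬝ᵥ u) • Matrix.vecMulVec p w := by
  ext i j
  simp only [Matrix.mul_apply, Matrix.vecMulVec_apply, Matrix.smul_apply, dotProduct,
    Finset.sum_mul, smul_eq_mul]
  exact Finset.sum_congr rfl fun k _ => by ring

lemma smul_vmv (t : ℂ) (p q : Fin m → ℂ) :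
    t • Matrix.vecMulVec p q = Matrix.vecMulVec (t • p) q := by
  ext i j
  simp [Matrix.vecMulVec_apply, mul_assoc]

lemma vmv_smul_smul (s t : ℂ) (p q : Fin m → ℂ) :
    Matrix.vecMulVec (s • p) (t • q) = (s * t) • Matrix.vecMulVec p q := by
  ext i j
  simp only [Matrix.vecMulVec_apply, Matrix.smul_apply, Pi.smul_apply, smul_eq_mul]
  ring

lemma prop_left {a b u w : Fin m → ℂ}
    (h : Matrix.vecMulVec a b = Matrix.vecMulVec u w) (ha : a ≠ 0) (hb : b ≠ 0) :
    ∃ lam : ℂ, lam ≠ 0 ∧ a = lam • u := by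
  obtain ⟨j, hj⟩ := Function.ne_iff.mp hb
  have key : a = (w j / b j) • u := by
    funext i
    have hij : a i * b j = u i * w j := by
      have := congrFun (congrFun h i) j
      simpa [Matrix.vecMulVec_apply] using this
    have hj' : b j ≠ 0 := hj
    simp only [Pi.smul_apply, smul_eq_mul]
    rw [div_mul_eq_mul_div, eq_div_iff hj']
    linear_combination hij
  refine ⟨w j / b j, fun h0 => ha ?_, key⟩
  rw [key, h0, zero_smul]

lemma prop_right {c d u w : Fin m → ℂ}
    (h : Matrix.vecMulVec c d = Matrix.vecMulVec u w) (hc : c ≠ 0) (hd : d ≠ 0) :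
    ∃ ν : ℂ, ν ≠ 0 ∧ d = ν • w := by
  obtain ⟨i, hi⟩ := Function.ne_iff.mp hc
  have key : d = (u i / c i) • w := by
    funext j
    have hij : c i * d j = u i * w j := by
      have := congrFun (congrFun h i) j
      simpa [Matrix.vecMulVec_apply] using this
    have hi' : c i ≠ 0 := hi
    simp only [Pi.smul_apply, smul_eq_mul]
    rw [div_mul_eq_mul_div, eq_div_iff hi']
    linear_combination hij
  refine ⟨u i / c i, fun h0 => hd ?_, key⟩
  rw [key, h0, zero_smul]

end LeftDivisorAux

/-- If `L(z) = B(z) L_l(z)` with `B` an elementary divisor with data `(p,q†,z_s,ζ_s)`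
and `L_l` regular and invertible at `z_s` and `ζ_s`, and `L` has residue `a b†` at `z_s`
while `M = L⁻¹` has residue `-c d†` at `ζ_s`, then `a ∥ p`, `d† ∥ q†`, and
`B(z) = I + ((z_s-ζ_s)/(z-z_s))·(a d†)/(d†a)`. -/
theorem left_divisor_from_residues {m : ℕ}
    (L Ll : ℂ → Matrix (Fin m) (Fin m) ℂ) (p q a b c d : Fin m → ℂ) (zs ζs : ℂ)
    (hpq : q ⬝ᵥ p ≠ 0) (hzζ : zs ≠ ζs)
    (hfact : ∀ᶠ z in 𝓝[≠] zs,
      L z = ((1 : Matrix (Fin m) (Fin m) ℂ) +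
        ((zs - ζs) / (z - zs)) • (q ⬝ᵥ p)⁻¹ • Matrix.vecMulVec p q) * Ll z)
    (hfact' : ∀ᶠ z in 𝓝[≠] ζs,
      L z = ((1 : Matrix (Fin m) (Fin m) ℂ) +
        ((zs - ζs) / (z - zs)) • (q ⬝ᵥ p)⁻¹ • Matrix.vecMulVec p q) * Ll z)
    (hreg₁ : ContinuousAt Ll zs) (hreg₂ : ContinuousAt Ll ζs)
    (hunit₁ : IsUnit (Ll zs)) (hunit₂ : IsUnit (Ll ζs))
    (hresL : Tendsto (fun z => (z - zs) • L z) (𝓝[≠] zs) (𝓝 (Matrix.vecMulVec a b)))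
    (hresM : Tendsto (fun z => (z - ζs) • (L z)⁻¹) (𝓝[≠] ζs)
      (𝓝 (-(Matrix.vecMulVec c d))))
    (ha : a ≠ 0) (hb : b ≠ 0) (hc : c ≠ 0) (hd : d ≠ 0)
    (hgen : Matrix.vecMul q (Ll zs) ≠ 0) (hda : d ⬝ᵥ a ≠ 0) :
    (∃ lam : ℂ, lam ≠ 0 ∧ a = lam • p) ∧
    (∃ ν : ℂ, ν ≠ 0 ∧ d = ν • q) ∧
    (∀ z : ℂ,
      (1 : Matrix (Fin m) (Fin m) ℂ) +
          ((zs - ζs) / (z - zs)) • (q ⬝ᵥ p)⁻¹ • Matrix.vecMulVec p q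
        = (1 : Matrix (Fin m) (Fin m) ℂ) +
            ((zs - ζs) / (z - zs)) • (d ⬝ᵥ a)⁻¹ • Matrix.vecMulVec a d) := by
  classical
  set P : Matrix (Fin m) (Fin m) ℂ := (q ⬝ᵥ p)⁻¹ • Matrix.vecMulVec p q with hPdef
  have hΔ : zs - ζs ≠ 0 := sub_ne_zero.mpr hzζ
  have hκ : (zs - ζs) * (q ⬝ᵥ p)⁻¹ ≠ 0 := mul_ne_zero hΔ (inv_ne_zero hpq)
  -- Step 1: residue of L at zs
  have hcont1 : ContinuousAt
      (fun z => ((z - zs) • (1 : Matrix (Fin m) (Fin m) ℂ) + (zs - ζs) • P) * Ll z) zs :=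
    (((continuousAt_id.sub continuousAt_const).smul continuousAt_const).add
      continuousAt_const).mul hreg₁
  have h1 : Tendsto (fun z => ((z - zs) • (1 : Matrix (Fin m) (Fin m) ℂ)
      + (zs - ζs) • P) * Ll z) (𝓝[≠] zs) (𝓝 ((zs - ζs) • (P * Ll zs))) := by
    have ht : Tendsto (fun z => ((z - zs) • (1 : Matrix (Fin m) (Fin m) ℂ)
        + (zs - ζs) • P) * Ll z) (𝓝[≠] zs)
        (𝓝 (((zs - zs) • (1 : Matrix (Fin m) (Fin m) ℂ) + (zs - ζs) • P) * Ll zs)) :=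
      hcont1.tendsto.mono_left nhdsWithin_le_nhds
    simpa [sub_self, Matrix.smul_mul] using ht
  have heq1 : ∀ᶠ z in 𝓝[≠] zs, (z - zs) • L z
      = ((z - zs) • (1 : Matrix (Fin m) (Fin m) ℂ) + (zs - ζs) • P) * Ll z := by
    filter_upwards [hfact, self_mem_nhdsWithin] with z hz hz'
    have hz0 : z - zs ≠ 0 := sub_ne_zero.mpr hz'
    have hcanc : (z - zs) * ((zs - ζs) / (z - zs)) = zs - ζs := by
      field_simp
    rw [hz, ← Matrix.smul_mul, smul_add, smul_smul, hcanc]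
  have huniq1 : Matrix.vecMulVec a b = (zs - ζs) • (P * Ll zs) :=
    tendsto_nhds_unique hresL (h1.congr' (heq1.mono fun z hz => hz.symm))
  have huniq1' : Matrix.vecMulVec a b
      = Matrix.vecMulVec (((zs - ζs) * (q ⬝ᵥ p)⁻¹) • p) (Matrix.vecMul q (Ll zs)) := by
    rw [huniq1, hPdef, Matrix.smul_mul, vmv_mul, smul_smul, smul_vmv]
  obtain ⟨lam, hlam, halam⟩ := prop_left huniq1' ha hb
  have hA : ∃ lam : ℂ, lam ≠ 0 ∧ a = lam • p := by
    refine ⟨lam * ((zs - ζs) * (q ⬝ᵥ p)⁻¹), mul_ne_zero hlam hκ, ?_⟩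
    rw [halam, smul_smul]
  -- Step 2: residue of M at ζs
  have hdetu : IsUnit (Ll ζs).det := (Matrix.isUnit_iff_isUnit_det _).mp hunit₂
  have hLlinv : ContinuousAt (fun z => (Ll z)⁻¹) ζs :=
    (continuousAt_matrix_inv (Ll ζs)
      (NormedRing.inverse_continuousAt hdetu.unit)).comp hreg₂
  have hcont2 : ContinuousAt (fun z => (Ll z)⁻¹ *
      ((z - ζs) • (1 : Matrix (Fin m) (Fin m) ℂ) - (zs - ζs) • P)) ζs :=
    hLlinv.mul (((continuousAt_id.sub continuousAt_const).smul continuousAt_const).sub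
      continuousAt_const)
  have h2 : Tendsto (fun z => (Ll z)⁻¹ *
      ((z - ζs) • (1 : Matrix (Fin m) (Fin m) ℂ) - (zs - ζs) • P)) (𝓝[≠] ζs)
      (𝓝 (-((zs - ζs) • ((Ll ζs)⁻¹ * P)))) := by
    have ht : Tendsto (fun z => (Ll z)⁻¹ *
        ((z - ζs) • (1 : Matrix (Fin m) (Fin m) ℂ) - (zs - ζs) • P)) (𝓝[≠] ζs)
        (𝓝 ((Ll ζs)⁻¹ *
          ((ζs - ζs) • (1 : Matrix (Fin m) (Fin m) ℂ) - (zs - ζs) • P))) :=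
      hcont2.tendsto.mono_left nhdsWithin_le_nhds
    simpa [sub_self, Matrix.mul_smul, zero_sub] using ht
  have hne : ∀ᶠ z in 𝓝[≠] ζs, z ≠ zs := by
    have : ∀ᶠ z in 𝓝 ζs, z ≠ zs := eventually_ne_nhds (Ne.symm hzζ)
    exact this.filter_mono nhdsWithin_le_nhds
  have heq2 : ∀ᶠ z in 𝓝[≠] ζs, (z - ζs) • (L z)⁻¹
      = (Ll z)⁻¹ * ((z - ζs) • (1 : Matrix (Fin m) (Fin m) ℂ) - (zs - ζs) • P) := by
    filter_upwards [hfact', self_mem_nhdsWithin, hne] with z hz hzζ' hzzs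
    have hz0 : z - zs ≠ 0 := sub_ne_zero.mpr hzzs
    have hζ0 : z - ζs ≠ 0 := sub_ne_zero.mpr hzζ'
    have hPP : P * P = P := by
      rw [hPdef, Matrix.smul_mul, Matrix.mul_smul, vmv_mul_vmv, smul_smul, smul_smul]
      congr 1
      field_simp
    have hBC : ((1 : Matrix (Fin m) (Fin m) ℂ) + ((zs - ζs) / (z - zs)) • P) *
        ((1 : Matrix (Fin m) (Fin m) ℂ) - ((zs - ζs) / (z - ζs)) • P) = 1 := by
      have hαβ : (zs - ζs) / (z - zs) - (zs - ζs) / (z - ζs)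
          - ((zs - ζs) / (z - zs)) * ((zs - ζs) / (z - ζs)) = 0 := by
        field_simp
        ring
      have hexp : ((1 : Matrix (Fin m) (Fin m) ℂ) + ((zs - ζs) / (z - zs)) • P) *
          ((1 : Matrix (Fin m) (Fin m) ℂ) - ((zs - ζs) / (z - ζs)) • P)
          = 1 + ((zs - ζs) / (z - zs) - (zs - ζs) / (z - ζs)
            - ((zs - ζs) / (z - zs)) * ((zs - ζs) / (z - ζs))) • P := by
        simp only [mul_sub, add_mul, one_mul, mul_one, Matrix.smul_mul, Matrix.mul_smul,
          hPP, smul_smul, sub_smul]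
        module
      rw [hexp, hαβ, zero_smul, add_zero]
    have hLinv : (L z)⁻¹ = (Ll z)⁻¹ *
        ((1 : Matrix (Fin m) (Fin m) ℂ) - ((zs - ζs) / (z - ζs)) • P) := by
      rw [hz, Matrix.mul_inv_rev, Matrix.inv_eq_right_inv hBC]
    have hsc : (z - ζs) • ((1 : Matrix (Fin m) (Fin m) ℂ) - ((zs - ζs) / (z - ζs)) • P)
        = (z - ζs) • (1 : Matrix (Fin m) (Fin m) ℂ) - (zs - ζs) • P := by
      rw [smul_sub, smul_smul]
      congr 2
      field_simp
    rw [hLinv, ← Matrix.mul_smul, hsc]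
  have huniq2 : -(Matrix.vecMulVec c d) = -((zs - ζs) • ((Ll ζs)⁻¹ * P)) :=
    tendsto_nhds_unique hresM (h2.congr' (heq2.mono fun z hz => hz.symm))
  have huniq2' : Matrix.vecMulVec c d
      = Matrix.vecMulVec (((zs - ζs) * (q ⬝ᵥ p)⁻¹) • ((Ll ζs)⁻¹).mulVec p) q := by
    have h3 : Matrix.vecMulVec c d = (zs - ζs) • ((Ll ζs)⁻¹ * P) := neg_inj.mp huniq2
    rw [h3, hPdef, Matrix.mul_smul, mul_vmv, smul_smul, smul_vmv]
  obtain ⟨ν, hν, hdν⟩ := prop_right huniq2' hc hd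
  refine ⟨hA, ⟨ν, hν, hdν⟩, fun z => ?_⟩
  -- Step 3
  obtain ⟨lam', hlam', halam'⟩ := hA
  have key : (q ⬝ᵥ p)⁻¹ • Matrix.vecMulVec p q = (d ⬝ᵥ a)⁻¹ • Matrix.vecMulVec a d := by
    rw [halam', hdν, vmv_smul_smul, smul_dotProduct, dotProduct_smul,
      smul_smul, smul_smul]
    congr 1
    field_simp
    ring
  rw [hPdef, key]
end

section
/- Let L(z) = diag(ρ₁,ρ₂) + L₁/(z-z₁) + L₂/(z-z₂) be the 2×2 matrix with residues given in terms of the type (ρ₁,ρ₂,ζ₁,ζ₂,z₁,z₂,k₁,k₂,μ) and spectral coordinates (γ,π) by Lemma 4.1 of the paper (explicit rank-one formulas). Then M(z) := L(z)⁻¹ has spectral coordinates (γ', π') with γ' = γ and π' = (γ-z₁)(γ-ζ₁) / (π(γ-z₂)(γ-ζ₂)); that is, M(γ)₂₁ = 0 and ((γ-ζ₁)/(γ-z₂))·M(γ)₁₁ = (γ-z₁)(γ-ζ₁)/(π(γ-z₂)(γ-ζ₂)). -/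
/-!
At `z = γ` the pole factors `(γ - zᵢ)⁻¹` cancel the factors `γ - zᵢ` of the residues, and the
`(2,1)`-entries of the two residues become `μ/(z₂ - z₁)` and `μ/(z₁ - z₂)`, which cancel. So `L(γ)`
is upper triangular, hence so is `M(γ) = L(γ)⁻¹`, with `M(γ)₁₁ = L(γ)₁₁⁻¹`; the same cancellation
leaves `L(γ)₁₁ = π(γ - ζ₂)/(γ - z₁)`, and the second coordinate follows.
-/

open Matrix

namespace Matrix

variable {K : Type*}

theorem inv_apply_one_zero_of_apply_one_zero [CommRing K] {A : Matrix (Fin 2) (Fin 2) K}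
    (h : A 1 0 = 0) : A⁻¹ 1 0 = 0 := by
  simp [inv_def, adjugate_fin_two, h]

theorem inv_apply_zero_zero_of_apply_one_zero [Field K] {A : Matrix (Fin 2) (Fin 2) K}
    (h : A 1 0 = 0) (hA : IsUnit A.det) : A⁻¹ 0 0 = (A 0 0)⁻¹ := by
  have hdet : A.det = A 0 0 * A 1 1 := by rw [det_fin_two, h, mul_zero, sub_zero]
  obtain ⟨h00, h11⟩ := mul_ne_zero_iff.mp (hdet ▸ hA.ne_zero)
  have hadj : A.adjugate 0 0 = A 1 1 := by simp [adjugate_fin_two]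
  rw [inv_def, hdet, Ring.inverse_eq_inv', smul_apply, hadj, smul_eq_mul]
  field_simp

end Matrix

section LaxMatrix

variable (ρ₁ ρ₂ z₁ z₂ ζ₁ ζ₂ γ μ π k₁ k₂ : ℂ)

-- The residues `L₁`, `L₂` of Lemma 4.1; in `laxMatrix … γ γ` the parameter `γ` is both the
-- spectral coordinate and the evaluation point, which gives `L(γ)`.
noncomputable def residue₁ : Matrix (Fin 2) (Fin 2) ℂ :=
  (μ * (γ - z₁) / (z₂ - z₁)) •
    vecMulVec
      ![(1/μ) * (ρ₁ * (k₁ + γ - z₂) - π * (γ - z₂) * (γ - ζ₂) / (γ - z₁)), 1]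
      ![1, (1/μ) * (ρ₂ * (k₂ + γ - z₂) - (ρ₁ * ρ₂ / π) * (γ - ζ₁))]

noncomputable def residue₂ : Matrix (Fin 2) (Fin 2) ℂ :=
  (μ * (γ - z₂) / (z₁ - z₂)) •
    vecMulVec
      ![(1/μ) * (ρ₁ * (k₁ + γ - z₁) - π * (γ - ζ₂)), 1]
      ![1, (1/μ) * (ρ₂ * (k₂ + γ - z₁) -
        (ρ₁ * ρ₂ / π) * (γ - z₁) * (γ - ζ₁) / (γ - z₂))]

noncomputable def laxMatrix (z : ℂ) : Matrix (Fin 2) (Fin 2) ℂ :=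
  diagonal ![ρ₁, ρ₂] + (z - z₁)⁻¹ • residue₁ ρ₁ ρ₂ z₁ z₂ ζ₁ ζ₂ γ μ π k₁ k₂
    + (z - z₂)⁻¹ • residue₂ ρ₁ ρ₂ z₁ z₂ ζ₁ ζ₂ γ μ π k₁ k₂

variable {ρ₁ ρ₂ z₁ z₂ ζ₁ ζ₂ γ μ π k₁ k₂}

theorem laxMatrix_self_one_zero (h₁ : γ ≠ z₁) (h₂ : γ ≠ z₂) :
    laxMatrix ρ₁ ρ₂ z₁ z₂ ζ₁ ζ₂ γ μ π k₁ k₂ γ 1 0 = 0 := by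
  have h₁ : γ - z₁ ≠ 0 := sub_ne_zero.mpr h₁
  have h₂ : γ - z₂ ≠ 0 := sub_ne_zero.mpr h₂
  calc laxMatrix ρ₁ ρ₂ z₁ z₂ ζ₁ ζ₂ γ μ π k₁ k₂ γ 1 0 = μ / (z₂ - z₁) + μ / (z₁ - z₂) := by
        simp only [laxMatrix, residue₁, residue₂, Matrix.add_apply, Matrix.smul_apply, smul_eq_mul,
          vecMulVec_apply, diagonal_apply_ne _ one_ne_zero, cons_val_zero, cons_val_one, zero_add]
        field_simp
    _ = 0 := by rw [← neg_sub z₂ z₁, div_neg, add_neg_cancel]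

theorem laxMatrix_self_zero_zero (hμ : μ ≠ 0) (h12 : z₁ ≠ z₂) (h₁ : γ ≠ z₁) (h₂ : γ ≠ z₂) :
    laxMatrix ρ₁ ρ₂ z₁ z₂ ζ₁ ζ₂ γ μ π k₁ k₂ γ 0 0 = π * (γ - ζ₂) / (γ - z₁) := by
  have h₁ : γ - z₁ ≠ 0 := sub_ne_zero.mpr h₁
  have h₂ : γ - z₂ ≠ 0 := sub_ne_zero.mpr h₂
  have h21 : z₂ - z₁ ≠ 0 := sub_ne_zero.mpr h12.symm
  have h12 : z₁ - z₂ ≠ 0 := sub_ne_zero.mpr h12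
  simp only [laxMatrix, residue₁, residue₂, Matrix.add_apply, Matrix.smul_apply, smul_eq_mul,
    vecMulVec_apply, diagonal_apply_eq, cons_val_zero]
  field_simp
  ring

end LaxMatrix

theorem inverse_spectral_coordinates_general (ρ₁ ρ₂ z₁ z₂ ζ₁ ζ₂ γ μ π k₁ k₂ : ℂ)
    (hμ : μ ≠ 0)
    (h12 : z₁ ≠ z₂)
    (hγz₁ : γ ≠ z₁) (hγz₂ : γ ≠ z₂)
    (Lγ : Matrix (Fin 2) (Fin 2) ℂ)
    (hLγ : Lγ = Matrix.diagonal ![ρ₁, ρ₂]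
        + (γ - z₁)⁻¹ • ((μ * (γ - z₁) / (z₂ - z₁)) •
            Matrix.vecMulVec
              ![(1/μ) * (ρ₁ * (k₁ + γ - z₂) - π * (γ - z₂) * (γ - ζ₂) / (γ - z₁)), 1]
              ![1, (1/μ) * (ρ₂ * (k₂ + γ - z₂) - (ρ₁ * ρ₂ / π) * (γ - ζ₁))])
        + (γ - z₂)⁻¹ • ((μ * (γ - z₂) / (z₁ - z₂)) •
            Matrix.vecMulVec
              ![(1/μ) * (ρ₁ * (k₁ + γ - z₁) - π * (γ - ζ₂)), 1]
              ![1, (1/μ) * (ρ₂ * (k₂ + γ - z₁) -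
                (ρ₁ * ρ₂ / π) * (γ - z₁) * (γ - ζ₁) / (γ - z₂))]))
    (hdet : IsUnit Lγ.det) :
    Lγ⁻¹ 1 0 = 0 ∧
    ((γ - ζ₁) / (γ - z₂)) * (Lγ⁻¹ 0 0)
      = (γ - z₁) * (γ - ζ₁) / (π * (γ - z₂) * (γ - ζ₂)) := by
  have hL : Lγ = laxMatrix ρ₁ ρ₂ z₁ z₂ ζ₁ ζ₂ γ μ π k₁ k₂ γ := hLγ
  have h10 : Lγ 1 0 = 0 := hL ▸ laxMatrix_self_one_zero hγz₁ hγz₂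
  have h00 : Lγ 0 0 = π * (γ - ζ₂) / (γ - z₁) := hL ▸ laxMatrix_self_zero_zero hμ h12 hγz₁ hγz₂
  refine ⟨inv_apply_one_zero_of_apply_one_zero h10, ?_⟩
  rw [inv_apply_zero_zero_of_apply_one_zero h10 hdet, h00, inv_div, div_mul_div_comm]
  ring

/-- The inverse matrix `M(z) = L(z)⁻¹` has the same spectral coordinate `γ` and
`π' = (γ-z₁)(γ-ζ₁)/(π(γ-z₂)(γ-ζ₂))`: i.e. `M(γ)₂₁ = 0` and
`((γ-ζ₁)/(γ-z₂))·M(γ)₁₁ = (γ-z₁)(γ-ζ₁)/(π(γ-z₂)(γ-ζ₂))`. -/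
theorem inverse_spectral_coordinates (ρ₁ ρ₂ z₁ z₂ ζ₁ ζ₂ γ μ π k₁ k₂ : ℂ)
    (hμ : μ ≠ 0) (hπ : π ≠ 0) (hρ₁ : ρ₁ ≠ 0) (hρ₂ : ρ₂ ≠ 0)
    (h12 : z₁ ≠ z₂) (hζ12 : ζ₁ ≠ ζ₂)
    (hγz₁ : γ ≠ z₁) (hγz₂ : γ ≠ z₂) (hγζ₁ : γ ≠ ζ₁) (hγζ₂ : γ ≠ ζ₂)
    (hk : k₁ + k₂ = (z₁ - ζ₁) + (z₂ - ζ₂))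
    (Lγ : Matrix (Fin 2) (Fin 2) ℂ)
    (hLγ : Lγ = Matrix.diagonal ![ρ₁, ρ₂]
        + (γ - z₁)⁻¹ • ((μ * (γ - z₁) / (z₂ - z₁)) •
            Matrix.vecMulVec
              ![(1/μ) * (ρ₁ * (k₁ + γ - z₂) - π * (γ - z₂) * (γ - ζ₂) / (γ - z₁)), 1]
              ![1, (1/μ) * (ρ₂ * (k₂ + γ - z₂) - (ρ₁ * ρ₂ / π) * (γ - ζ₁))])
        + (γ - z₂)⁻¹ • ((μ * (γ - z₂) / (z₁ - z₂)) •
            Matrix.vecMulVec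
              ![(1/μ) * (ρ₁ * (k₁ + γ - z₁) - π * (γ - ζ₂)), 1]
              ![1, (1/μ) * (ρ₂ * (k₂ + γ - z₁) -
                (ρ₁ * ρ₂ / π) * (γ - z₁) * (γ - ζ₁) / (γ - z₂))]))
    (hdet : IsUnit Lγ.det) :
    Lγ⁻¹ 1 0 = 0 ∧
    ((γ - ζ₁) / (γ - z₂)) * (Lγ⁻¹ 0 0)
      = (γ - z₁) * (γ - ζ₁) / (π * (γ - z₂) * (γ - ζ₂)) :=
  inverse_spectral_coordinates_general ρ₁ ρ₂ z₁ z₂ ζ₁ ζ₂ γ μ π k₁ k₂ hμ h12 hγz₁ hγz₂ Lγ hLγ hdet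
end
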